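/- Let X be a Banach space of type p ∈ [1,2] and let T be an absolutely Cesàro bounded operator on X. Then ‖T^n‖ = O(n^{1/p}). -/

import Mathlib

open MeasureTheory Filter Asymptotics Finset

/-- The sign `±1` attached to a Boolean. -/
def rsign (b : Bool) : ℝ := if b then 1 else -1

/-- `X` has (Rademacher) type `p`: the expectation over all sign patterns of
`‖∑ εᵢ xᵢ‖^p` is at most `K` times `∑ ‖xᵢ‖^p`. -/
def HasTypeP (X : Type) [NormedAddCommGroup X] [NormedSpace ℝ X] (p : ℝ) : Prop :=
  ∃ K : ℝ, 0 < K ∧ ∀ n : ℕ, ∀ x : Fin n → X,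
    ∑ ε : Fin n → Bool, ‖∑ i, rsign (ε i) • x i‖ ^ p ≤
      2 ^ n * K * ∑ i, ‖x i‖ ^ p

/-- `T` is absolutely Cesàro bounded with constant `C`. -/
def AbsCesaroBounded {X : Type} [NormedAddCommGroup X] [NormedSpace ℂ X]
    (T : X →L[ℂ] X) (C : ℝ) : Prop :=
  0 < C ∧ ∀ n : ℕ, 1 ≤ n → ∀ x : X,
    ∑ k ∈ Finset.range n, ‖(T ^ k) x‖ ≤ C * n * ‖x‖

/-!
Fix `n`, `x` with `Tⁿx ≠ 0`, put `N = n + 1`, `aᵢ = ‖Tⁱx‖` and `vᵢ = Tⁱx / aᵢ` for `i ≤ n`.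
Averaging `ε_{n-j} Tʲ(∑ εᵢvᵢ)` over all sign patterns recovers `Tʲv_{n-j} = Tⁿx / a_{n-j}`;
summing over `j < N` and applying the Cesàro bound to each Rademacher sum `∑ εᵢvᵢ` gives
`aₙ ∑ 1/aᵢ ≤ C N · avg_ε ‖∑ εᵢvᵢ‖ ≤ C N · K^{1/p} N^{1/p}` by type `p`.
The Cesàro bound for `x` and Cauchy–Schwarz give `N² ≤ (∑ aᵢ)(∑ 1/aᵢ) ≤ C N ‖x‖ ∑ 1/aᵢ`,
hence `‖Tⁿx‖ ≤ C² K^{1/p} N^{1/p} ‖x‖`.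
-/

lemma rsign_mul_self (b : Bool) : rsign b * rsign b = 1 := by cases b <;> simp [rsign]

lemma rsign_not (b : Bool) : rsign (!b) = -rsign b := by cases b <;> simp [rsign]

lemma norm_rsign (b : Bool) : ‖rsign b‖ = 1 := by cases b <;> simp [rsign]

lemma sum_rsign_mul_rsign {N : ℕ} (i k : Fin N) :
    ∑ ε : Fin N → Bool, rsign (ε i) * rsign (ε k) = if i = k then (2 : ℝ) ^ N else 0 := by
  rcases eq_or_ne i k with rfl | hik
  · simp [rsign_mul_self, card_univ]
  · rw [if_neg hik]
    -- flipping the `i`-th sign is an involution that negates every summand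
    let σ : (Fin N → Bool) → (Fin N → Bool) := fun ε => Function.update ε i (!ε i)
    have hσ : Function.Involutive σ := fun ε => by
      ext j
      rcases eq_or_ne j i with rfl | hj <;> simp [σ, Function.update_of_ne, *]
    have hneg (ε : Fin N → Bool) :
        rsign (σ ε i) * rsign (σ ε k) = -(rsign (ε i) * rsign (ε k)) := by
      simp only [σ, Function.update_self, Function.update_of_ne hik.symm, rsign_not, neg_mul]
    have := Equiv.sum_comp hσ.toPerm fun ε => rsign (ε i) * rsign (ε k)
    simp only [Function.Involutive.coe_toPerm, hneg, sum_neg_distrib] at this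
    linarith

lemma sum_rsign_smul_sum_rsign_smul {E : Type*} [AddCommGroup E] [Module ℝ E] {N : ℕ}
    (v : Fin N → E) (i : Fin N) :
    ∑ ε : Fin N → Bool, rsign (ε i) • ∑ k, rsign (ε k) • v k = (2 : ℝ) ^ N • v i := by
  simp_rw [smul_sum, smul_smul]
  rw [sum_comm]
  simp_rw [← sum_smul, sum_rsign_mul_rsign, ite_smul, zero_smul, sum_ite_eq,
    mem_univ, if_true]

lemma two_pow_mul_norm_le_sum_norm_rademacher {E F : Type*} [AddCommGroup E] [Module ℝ E]
    [SeminormedAddCommGroup F] [NormedSpace ℝ F] (L : E →ₗ[ℝ] F) {N : ℕ} (v : Fin N → E)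
    (i : Fin N) :
    2 ^ N * ‖L (v i)‖ ≤ ∑ ε : Fin N → Bool, ‖L (∑ k, rsign (ε k) • v k)‖ :=
  calc 2 ^ N * ‖L (v i)‖ = ‖∑ ε : Fin N → Bool, rsign (ε i) • L (∑ k, rsign (ε k) • v k)‖ := by
        simp_rw [← map_smul, ← map_sum, sum_rsign_smul_sum_rsign_smul, map_smul, norm_smul,
          Real.norm_of_nonneg (by positivity : (0 : ℝ) ≤ 2 ^ N)]
    _ ≤ ∑ ε : Fin N → Bool, ‖L (∑ k, rsign (ε k) • v k)‖ := by
        refine (norm_sum_le _ _).trans_eq (sum_congr rfl fun ε _ => ?_)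
        rw [norm_smul, norm_rsign, one_mul]

lemma sum_le_card_mul_rpow_of_sum_rpow_le {ι : Type*} (s : Finset ι) {f : ι → ℝ}
    (hf : ∀ i ∈ s, 0 ≤ f i) {p B : ℝ} (hp : 1 ≤ p) (hB : ∑ i ∈ s, f i ^ p ≤ #s * B) :
    ∑ i ∈ s, f i ≤ #s * B ^ (1 / p) := by
  rcases s.eq_empty_or_nonempty with rfl | hs
  · simp
  have hcard : (0 : ℝ) < #s := by exact_mod_cast hs.card_pos
  have hmean := Real.arith_mean_le_rpow_mean s (fun _ => (#s : ℝ)⁻¹) f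
    (fun _ _ => inv_nonneg.2 hcard.le) (by simp [hcard.ne']) hf hp
  rw [← mul_sum, ← mul_sum] at hmean
  have hpow_nonneg : 0 ≤ (#s : ℝ)⁻¹ * ∑ i ∈ s, f i ^ p :=
    mul_nonneg (inv_nonneg.2 hcard.le) (sum_nonneg fun i hi => Real.rpow_nonneg (hf i hi) p)
  calc ∑ i ∈ s, f i = #s * ((#s : ℝ)⁻¹ * ∑ i ∈ s, f i) := by field_simp
    _ ≤ #s * ((#s : ℝ)⁻¹ * ∑ i ∈ s, f i ^ p) ^ (1 / p) := by gcongr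
    _ ≤ #s * B ^ (1 / p) := by
        gcongr
        rwa [inv_mul_le_iff₀ hcard]

def RademacherAverageBound (X : Type) [NormedAddCommGroup X] [NormedSpace ℝ X] (p M : ℝ) :
    Prop :=
  ∀ (N : ℕ) (v : Fin N → X), (∀ i, ‖v i‖ ≤ 1) →
    ∑ ε : Fin N → Bool, ‖∑ k, rsign (ε k) • v k‖ ≤ 2 ^ N * M * (N : ℝ) ^ (1 / p)

lemma HasTypeP.exists_rademacherAverageBound {X : Type} [NormedAddCommGroup X]
    [NormedSpace ℝ X] {p : ℝ} (h : HasTypeP X p) (hp : 1 ≤ p) :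
    ∃ M, 0 ≤ M ∧ RademacherAverageBound X p M := by
  obtain ⟨K, hK, hKtype⟩ := h
  refine ⟨K ^ (1 / p), by positivity, fun N v hv => ?_⟩
  have hvp : ∑ i, ‖v i‖ ^ p ≤ N := by
    calc ∑ i, ‖v i‖ ^ p ≤ ∑ _i : Fin N, (1 : ℝ) :=
          sum_le_sum fun i _ => Real.rpow_le_one (norm_nonneg _) (hv i) (by linarith)
      _ = N := by simp
  have hsum : ∑ ε : Fin N → Bool, ‖∑ k, rsign (ε k) • v k‖ ^ p ≤
      #(univ : Finset (Fin N → Bool)) * (K * N) := by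
    calc _ ≤ 2 ^ N * K * ∑ i, ‖v i‖ ^ p := hKtype N v
      _ ≤ 2 ^ N * K * N := by gcongr
      _ = _ := by simp [mul_assoc]
  have := sum_le_card_mul_rpow_of_sum_rpow_le univ (fun ε _ => norm_nonneg _) hp hsum
  simpa [Real.mul_rpow hK.le (Nat.cast_nonneg N), mul_assoc] using this

lemma sq_card_le_sum_mul_sum_inv {ι : Type*} (s : Finset ι) {f : ι → ℝ}
    (hf : ∀ i ∈ s, 0 < f i) : (#s : ℝ) ^ 2 ≤ (∑ i ∈ s, f i) * ∑ i ∈ s, (f i)⁻¹ := by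
  simpa using sum_sq_le_sum_mul_sum_of_sq_le_mul s (r := fun _ => (1 : ℝ))
    (fun i hi => (hf i hi).le) (fun i hi => (inv_pos.2 (hf i hi)).le)
    (fun i hi => by rw [one_pow, mul_inv_cancel₀ (hf i hi).ne'])

lemma pow_apply_ne_zero_of_le {R E : Type*} [Semiring R] [TopologicalSpace E] [AddCommMonoid E]
    [Module R E] (T : E →L[R] E) {x : E} {i n : ℕ} (hin : i ≤ n) (hx : (T ^ n) x ≠ 0) :
    (T ^ i) x ≠ 0 := by
  contrapose! hx
  rw [← Nat.sub_add_cancel hin, pow_add, mul_apply_eq_comp, hx, map_zero]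

section
variable {X : Type} [NormedAddCommGroup X] [NormedSpace ℂ X]

lemma norm_pow_apply_mul_sum_inv_le {T : X →L[ℂ] X} {C M p : ℝ} (hT : AbsCesaroBounded T C)
    (hM : RademacherAverageBound X p M) (n : ℕ) (x : X) :
    ‖(T ^ n) x‖ * ∑ i ∈ range (n + 1), ‖(T ^ i) x‖⁻¹ ≤
      C * (n + 1 : ℕ) * (M * ((n + 1 : ℕ) : ℝ) ^ (1 / p)) := by
  set N := n + 1
  set a : ℕ → ℝ := fun i => ‖(T ^ i) x‖
  -- the normalised orbit; `0⁻¹ = 0` makes the normalisation harmless where the orbit vanishes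
  set v : Fin N → X := fun i => (a i)⁻¹ • (T ^ (i : ℕ)) x
  set z : (Fin N → Bool) → X := fun ε => ∑ k, rsign (ε k) • v k
  have hv (i : Fin N) : ‖v i‖ ≤ 1 := by
    simpa [v, a, norm_smul] using inv_mul_le_one_of_le₀ le_rfl (norm_nonneg ((T ^ (i : ℕ)) x))
  have hTv (j : ℕ) (hj : j < N) :
      (T ^ j) (v ⟨n - j, by omega⟩) = (a (n - j))⁻¹ • (T ^ n) x := by
    simp only [v, ContinuousLinearMap.map_smul_of_tower]
    rw [← mul_apply_eq_comp, ← pow_add, Nat.add_sub_cancel' (by omega)]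
  have hstep (j : ℕ) (hj : j ∈ range N) :
      2 ^ N * (a (n - j))⁻¹ * a n ≤ ∑ ε, ‖(T ^ j) (z ε)‖ := by
    have hjN : j < N := mem_range.1 hj
    have := two_pow_mul_norm_le_sum_norm_rademacher
      ((T ^ j).toLinearMap.restrictScalars ℝ) v ⟨n - j, by omega⟩
    change 2 ^ N * ‖(T ^ j) (v ⟨n - j, _⟩)‖ ≤ ∑ ε, ‖(T ^ j) (z ε)‖ at this
    rwa [hTv j hjN, norm_smul, norm_inv, norm_norm, ← mul_assoc] at this
  have hreflect : ∑ j ∈ range N, (a (n - j))⁻¹ = ∑ i ∈ range N, (a i)⁻¹ :=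
    sum_range_reflect (fun i => (a i)⁻¹) N
  refine le_of_mul_le_mul_left ?_ (by positivity : (0 : ℝ) < 2 ^ N)
  calc 2 ^ N * (a n * ∑ i ∈ range N, (a i)⁻¹)
      = ∑ j ∈ range N, 2 ^ N * (a (n - j))⁻¹ * a n := by
        rw [← hreflect, mul_sum, mul_sum]
        exact sum_congr rfl fun j _ => by ring
    _ ≤ ∑ j ∈ range N, ∑ ε, ‖(T ^ j) (z ε)‖ := sum_le_sum hstep
    _ = ∑ ε, ∑ j ∈ range N, ‖(T ^ j) (z ε)‖ := sum_comm
    _ ≤ ∑ ε, C * N * ‖z ε‖ := sum_le_sum fun ε _ => hT.2 N (by omega) (z ε)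
    _ = C * N * ∑ ε, ‖z ε‖ := (mul_sum _ _ _).symm
    _ ≤ C * N * (2 ^ N * M * (N : ℝ) ^ (1 / p)) := by
        have := hT.1
        gcongr
        exact hM N v hv
    _ = 2 ^ N * (C * N * (M * (N : ℝ) ^ (1 / p))) := by ring

lemma norm_pow_apply_le {T : X →L[ℂ] X} {C M p : ℝ} (hT : AbsCesaroBounded T C) (hM0 : 0 ≤ M)
    (hM : RademacherAverageBound X p M) (n : ℕ) (x : X) :
    ‖(T ^ n) x‖ ≤ C ^ 2 * M * ((n + 1 : ℕ) : ℝ) ^ (1 / p) * ‖x‖ := by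
  have hC := hT.1
  rcases eq_or_ne ((T ^ n) x) 0 with hn | hn
  · rw [hn, norm_zero]
    positivity
  set N := n + 1
  have horbit : ∀ i ∈ range N, 0 < ‖(T ^ i) x‖ := fun i hi =>
    norm_pos_iff.2 (pow_apply_ne_zero_of_le T (Nat.lt_succ_iff.1 (mem_range.1 hi)) hn)
  have hCS := sq_card_le_sum_mul_sum_inv (range N) horbit
  rw [card_range] at hCS
  have hinv : 0 ≤ ∑ i ∈ range N, ‖(T ^ i) x‖⁻¹ :=
    sum_nonneg fun i hi => (inv_pos.2 (horbit i hi)).le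
  refine le_of_mul_le_mul_right ?_ (by positivity : (0 : ℝ) < (N : ℝ) ^ 2)
  calc ‖(T ^ n) x‖ * (N : ℝ) ^ 2
      ≤ ‖(T ^ n) x‖ * ((∑ i ∈ range N, ‖(T ^ i) x‖) * ∑ i ∈ range N, ‖(T ^ i) x‖⁻¹) := by
        gcongr
    _ ≤ ‖(T ^ n) x‖ * ((C * N * ‖x‖) * ∑ i ∈ range N, ‖(T ^ i) x‖⁻¹) := by
        gcongr
        exact hT.2 N (by omega) x
    _ = (C * N * ‖x‖) * (‖(T ^ n) x‖ * ∑ i ∈ range N, ‖(T ^ i) x‖⁻¹) := by ring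
    _ ≤ (C * N * ‖x‖) * (C * N * (M * (N : ℝ) ^ (1 / p))) :=
        mul_le_mul_of_nonneg_left (norm_pow_apply_mul_sum_inv_le hT hM n x) (by positivity)
    _ = C ^ 2 * M * (N : ℝ) ^ (1 / p) * ‖x‖ * (N : ℝ) ^ 2 := by ring

end

lemma isBigO_natCast_add_one_rpow {r : ℝ} (hr : 0 ≤ r) :
    (fun n : ℕ => ((n + 1 : ℕ) : ℝ) ^ r) =O[atTop] fun n : ℕ => (n : ℝ) ^ r := by
  refine IsBigO.rpow hr (Eventually.of_forall fun n => Nat.cast_nonneg n) (IsBigO.of_bound 2 ?_)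
  filter_upwards [eventually_ge_atTop 1] with n hn
  have : (1 : ℝ) ≤ n := by exact_mod_cast hn
  simp only [Nat.cast_add, Nat.cast_one, Real.norm_eq_abs]
  rw [abs_of_nonneg (by positivity), abs_of_nonneg (by positivity)]
  linarith

theorem abs_cesaro_type_power_growth_general
    {X : Type} [NormedAddCommGroup X] [NormedSpace ℂ X]
    (p : ℝ) (hp1 : 1 ≤ p) (htype : HasTypeP X p)
    (T : X →L[ℂ] X) (C₀ : ℝ) (hT : AbsCesaroBounded T C₀) :
    (fun n : ℕ => ‖T ^ n‖) =O[atTop] fun n : ℕ => (n : ℝ) ^ (1 / p) := by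
  obtain ⟨M, hM0, hM⟩ := htype.exists_rademacherAverageBound hp1
  refine (IsBigO.of_bound (C₀ ^ 2 * M) (Eventually.of_forall fun n => ?_)).trans
    (isBigO_natCast_add_one_rpow (by positivity))
  rw [norm_norm, Real.norm_of_nonneg (by positivity)]
  have := hT.1
  exact ContinuousLinearMap.opNorm_le_bound _ (by positivity) (norm_pow_apply_le hT hM0 hM n)

theorem abs_cesaro_type_power_growth
    {X : Type} [NormedAddCommGroup X] [NormedSpace ℂ X]
    (p : ℝ) (hp1 : 1 ≤ p) (hp2 : p ≤ 2) (htype : HasTypeP X p)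
    (T : X →L[ℂ] X) (C₀ : ℝ) (hT : AbsCesaroBounded T C₀) :
    (fun n : ℕ => ‖T ^ n‖) =O[atTop] fun n : ℕ => (n : ℝ) ^ (1 / p) :=
  abs_cesaro_type_power_growth_general p hp1 htype T C₀ hT
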